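/- arXiv:2503.07351 — 3 statements merged into one kernel-verified Lean document; each statement's English description precedes it below -/
import Mathlib

section
/- Let (A,R) be a finite argumentation framework. A function ℓ : A → {0, 1/2, 1} is a complete labelling if and only if for every a ∈ A, ℓ(a) equals the minimum over all attackers b of a of 1 - ℓ(b) (where the minimum over the empty set is 1). Equivalently: complete labellings coincide with solutions of the Gödel-encoded equational system. -/
/-!
A finite minimum of values from `{0, 1/2, 1}` (with `1` as the value of the empty minimum)
is again in `{0, 1/2, 1}`, and on this set a value is determined by whether it is `1` and
whether it is `0`. The minimum of `1 - ℓ b` over the attackers `b` of `a` is `1` exactly when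
every attacker is labelled `0`, and `0` exactly when some attacker is labelled `1`; these are the
two clauses of a complete labelling.
-/

def IsTruthValue (x : ℝ) : Prop := x = 0 ∨ x = 1/2 ∨ x = 1

namespace IsTruthValue

variable {x y : ℝ}

lemma nonneg (hx : IsTruthValue x) : 0 ≤ x := by
  rcases hx with rfl | rfl | rfl <;> norm_num

lemma le_one (hx : IsTruthValue x) : x ≤ 1 := by
  rcases hx with rfl | rfl | rfl <;> norm_num

lemma one_sub (hx : IsTruthValue x) : IsTruthValue (1 - x) := by
  rcases hx with rfl | rfl | rfl <;> norm_num [IsTruthValue]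

lemma eq_iff (hx : IsTruthValue x) (hy : IsTruthValue y) :
    x = y ↔ (x = 1 ↔ y = 1) ∧ (x = 0 ↔ y = 0) := by
  rcases hx with rfl | rfl | rfl <;> rcases hy with rfl | rfl | rfl <;> norm_num

end IsTruthValue

namespace Finset

variable {α : Type*}

lemma fold_min_eq_or_exists_eq {β : Type*} [LinearOrder β] (s : Finset α) (b : β)
    (f : α → β) :
    s.fold min b f = b ∨ ∃ x ∈ s, s.fold min b f = f x := by
  induction s using Finset.cons_induction with
  | empty => exact Or.inl rfl
  | cons a s _ ih =>
    rw [fold_cons]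
    rcases min_choice (f a) (s.fold min b f) with h | h <;> rw [h]
    · exact Or.inr ⟨a, mem_cons_self a s, rfl⟩
    · rcases ih with ih | ⟨x, hx, ih⟩
      · exact Or.inl ih
      · exact Or.inr ⟨x, mem_cons_of_mem hx, ih⟩

lemma isTruthValue_fold_min_one_sub (s : Finset α) {g : α → ℝ}
    (hg : ∀ b ∈ s, IsTruthValue (g b)) : IsTruthValue (s.fold min 1 fun b => 1 - g b) := by
  rcases fold_min_eq_or_exists_eq s 1 (fun b => 1 - g b) with h | ⟨b, hb, h⟩ <;> rw [h]
  · exact Or.inr (Or.inr rfl)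
  · exact (hg b hb).one_sub

lemma fold_min_one_sub_eq_one_iff (s : Finset α) {g : α → ℝ} (hg : ∀ b ∈ s, 0 ≤ g b) :
    (s.fold min 1 fun b => 1 - g b) = 1 ↔ ∀ b ∈ s, g b = 0 := by
  rw [le_antisymm_iff, and_iff_right ((fold_min_le 1).2 (Or.inl le_rfl)), le_fold_min]
  refine ⟨fun h b hb => le_antisymm ?_ (hg b hb), fun h => ⟨le_rfl, fun b hb => ?_⟩⟩
  · linarith [h.2 b hb]
  · rw [h b hb, sub_zero]

lemma fold_min_one_sub_eq_zero_iff (s : Finset α) {g : α → ℝ} (hg : ∀ b ∈ s, g b ≤ 1) :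
    (s.fold min 1 fun b => 1 - g b) = 0 ↔ ∃ b ∈ s, g b = 1 := by
  have hnonneg : 0 ≤ s.fold min 1 fun b => 1 - g b :=
    (le_fold_min 0).2 ⟨zero_le_one, fun b hb => sub_nonneg.2 (hg b hb)⟩
  rw [le_antisymm_iff, and_iff_left hnonneg, fold_min_le, or_iff_right (by norm_num)]
  refine exists_congr fun b => and_congr_right fun hb =>
    ⟨fun h => le_antisymm (hg b hb) ?_, fun h => ?_⟩
  · linarith
  · rw [h, sub_self]

end Finset

theorem complete_iff_godel_encoded_general {A : Type*} [Fintype A]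
    (R : A → A → Prop) [DecidableRel R]
    (ℓ : A → ℝ) (hrange : ∀ a, ℓ a = 0 ∨ ℓ a = 1/2 ∨ ℓ a = 1) :
    ((∀ a, (ℓ a = 1 ↔ ∀ b, R b a → ℓ b = 0) ∧
           (ℓ a = 0 ↔ ∃ b, R b a ∧ ℓ b = 1))
      ↔
     (∀ a, ℓ a =
        Finset.fold min 1 (fun b => 1 - ℓ b) (Finset.univ.filter (fun b => R b a)))) := by
  refine forall_congr' fun a => ?_
  set attackers := Finset.univ.filter (fun b => R b a)
  have hℓ : ∀ b, IsTruthValue (ℓ b) := hrange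
  rw [(hℓ a).eq_iff (attackers.isTruthValue_fold_min_one_sub fun b _ => hℓ b),
    attackers.fold_min_one_sub_eq_one_iff fun b _ => (hℓ b).nonneg,
    attackers.fold_min_one_sub_eq_zero_iff fun b _ => (hℓ b).le_one]
  simp only [attackers, Finset.mem_filter, Finset.mem_univ, true_and]

/-- Complete labellings coincide with solutions of the Gödel-encoded equational system:
ℓ(a) = min over attackers b of (1 - ℓ(b)), with min over ∅ = 1. -/
theorem complete_iff_godel_encoded {A : Type*} [Fintype A] [DecidableEq A]
    (R : A → A → Prop) [DecidableRel R]
    (ℓ : A → ℝ) (hrange : ∀ a, ℓ a = 0 ∨ ℓ a = 1/2 ∨ ℓ a = 1) :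
    ((∀ a, (ℓ a = 1 ↔ ∀ b, R b a → ℓ b = 0) ∧
           (ℓ a = 0 ↔ ∃ b, R b a ∧ ℓ b = 1))
      ↔
     (∀ a, ℓ a =
        Finset.fold min 1 (fun b => 1 - ℓ b) (Finset.univ.filter (fun b => R b a)))) :=
  complete_iff_godel_encoded_general R ℓ hrange
end

section
/- Let (A,R) be a finite argumentation framework, N the standard negation, * a t-norm without zero divisors, and ‖·‖ : A → [0,1] a solution of the encoded system ‖a‖ = *-product of N(‖b‖) over attackers b (empty product 1). Define ℓ(a) = 1 if ‖a‖ = 1; ℓ(a) = 0 if some attacker b of a has ‖b‖ = 1; ℓ(a) = 1/2 otherwise. Then ℓ is a complete labelling of (A,R). -/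
/-!
A t-norm product of values in `[0, 1]` lies below each factor and, without zero divisors, is
positive when all factors are. So it is `1` iff every factor is `1`, and `0` iff some factor is `0`:
`‖a‖ = 1` iff every attacker has value `0`, and `‖a‖ = 0` iff some attacker has value `1`.
In particular the ternarization labels `1` exactly the arguments of value `1` and `0` exactly
those of value `0`, and the two equivalences become the conditions of a complete labelling.
-/

open Set

section TNorm

variable {T : ℝ → ℝ → ℝ} {x y : ℝ} {l : List ℝ}

theorem tnorm_le_left (hT1 : ∀ x ∈ Icc (0:ℝ) 1, T x 1 = x)
    (hTmono : ∀ x ∈ Icc (0:ℝ) 1, ∀ y ∈ Icc (0:ℝ) 1, ∀ u ∈ Icc (0:ℝ) 1,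
      ∀ v ∈ Icc (0:ℝ) 1, x ≤ u → y ≤ v → T x y ≤ T u v)
    (hx : x ∈ Icc (0:ℝ) 1) (hy : y ∈ Icc (0:ℝ) 1) : T x y ≤ x :=
  calc T x y ≤ T x 1 := hTmono x hx y hy x hx 1 (right_mem_Icc.2 zero_le_one) le_rfl hy.2
    _ = x := hT1 x hx

theorem tnorm_le_right (hT1 : ∀ x ∈ Icc (0:ℝ) 1, T x 1 = x)
    (hTcomm : ∀ x ∈ Icc (0:ℝ) 1, ∀ y ∈ Icc (0:ℝ) 1, T x y = T y x)
    (hTmono : ∀ x ∈ Icc (0:ℝ) 1, ∀ y ∈ Icc (0:ℝ) 1, ∀ u ∈ Icc (0:ℝ) 1,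
      ∀ v ∈ Icc (0:ℝ) 1, x ≤ u → y ≤ v → T x y ≤ T u v)
    (hx : x ∈ Icc (0:ℝ) 1) (hy : y ∈ Icc (0:ℝ) 1) : T x y ≤ y :=
  hTcomm x hx y hy ▸ tnorm_le_left hT1 hTmono hy hx

theorem foldr_mem_Icc (hT_mem : ∀ x ∈ Icc (0:ℝ) 1, ∀ y ∈ Icc (0:ℝ) 1, T x y ∈ Icc (0:ℝ) 1)
    (hl : ∀ x ∈ l, x ∈ Icc (0:ℝ) 1) : l.foldr T 1 ∈ Icc (0:ℝ) 1 := by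
  induction l with
  | nil => exact right_mem_Icc.2 zero_le_one
  | cons x l ih =>
    rw [List.forall_mem_cons] at hl
    exact hT_mem x hl.1 _ (ih hl.2)

theorem foldr_le_of_mem (hT_mem : ∀ x ∈ Icc (0:ℝ) 1, ∀ y ∈ Icc (0:ℝ) 1, T x y ∈ Icc (0:ℝ) 1)
    (hT1 : ∀ x ∈ Icc (0:ℝ) 1, T x 1 = x)
    (hTcomm : ∀ x ∈ Icc (0:ℝ) 1, ∀ y ∈ Icc (0:ℝ) 1, T x y = T y x)
    (hTmono : ∀ x ∈ Icc (0:ℝ) 1, ∀ y ∈ Icc (0:ℝ) 1, ∀ u ∈ Icc (0:ℝ) 1,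
      ∀ v ∈ Icc (0:ℝ) 1, x ≤ u → y ≤ v → T x y ≤ T u v)
    (hl : ∀ x ∈ l, x ∈ Icc (0:ℝ) 1) (hx : x ∈ l) : l.foldr T 1 ≤ x := by
  induction l with
  | nil => simp at hx
  | cons y l ih =>
    rw [List.forall_mem_cons] at hl
    have hrest := foldr_mem_Icc hT_mem hl.2
    rcases List.mem_cons.1 hx with rfl | hx
    · exact tnorm_le_left hT1 hTmono hl.1 hrest
    · exact (tnorm_le_right hT1 hTcomm hTmono hl.1 hrest).trans (ih hl.2 hx)

theorem foldr_pos (hT_mem : ∀ x ∈ Icc (0:ℝ) 1, ∀ y ∈ Icc (0:ℝ) 1, T x y ∈ Icc (0:ℝ) 1)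
    (hTnzd : ∀ a b : ℝ, 0 < a → a ≤ 1 → 0 < b → b ≤ 1 → 0 < T a b)
    (hl : ∀ x ∈ l, x ∈ Icc (0:ℝ) 1) (hpos : ∀ x ∈ l, 0 < x) : 0 < l.foldr T 1 := by
  induction l with
  | nil => exact one_pos
  | cons x l ih =>
    rw [List.forall_mem_cons] at hl hpos
    exact hTnzd x _ hpos.1 hl.1.2 (ih hl.2 hpos.2) (foldr_mem_Icc hT_mem hl.2).2

theorem foldr_eq_one_iff (hT_mem : ∀ x ∈ Icc (0:ℝ) 1, ∀ y ∈ Icc (0:ℝ) 1, T x y ∈ Icc (0:ℝ) 1)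
    (hT1 : ∀ x ∈ Icc (0:ℝ) 1, T x 1 = x)
    (hTcomm : ∀ x ∈ Icc (0:ℝ) 1, ∀ y ∈ Icc (0:ℝ) 1, T x y = T y x)
    (hTmono : ∀ x ∈ Icc (0:ℝ) 1, ∀ y ∈ Icc (0:ℝ) 1, ∀ u ∈ Icc (0:ℝ) 1,
      ∀ v ∈ Icc (0:ℝ) 1, x ≤ u → y ≤ v → T x y ≤ T u v)
    (hl : ∀ x ∈ l, x ∈ Icc (0:ℝ) 1) : l.foldr T 1 = 1 ↔ ∀ x ∈ l, x = 1 := by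
  refine ⟨fun h x hx => le_antisymm (hl x hx).2 ?_, fun h => ?_⟩
  · exact h ▸ foldr_le_of_mem hT_mem hT1 hTcomm hTmono hl hx
  · induction l with
    | nil => rfl
    | cons x l ih =>
      rw [List.forall_mem_cons] at hl h
      rw [List.foldr_cons, ih hl.2 h.2, h.1]
      exact hT1 1 (right_mem_Icc.2 zero_le_one)

theorem foldr_eq_zero_iff (hT_mem : ∀ x ∈ Icc (0:ℝ) 1, ∀ y ∈ Icc (0:ℝ) 1, T x y ∈ Icc (0:ℝ) 1)
    (hT1 : ∀ x ∈ Icc (0:ℝ) 1, T x 1 = x)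
    (hTcomm : ∀ x ∈ Icc (0:ℝ) 1, ∀ y ∈ Icc (0:ℝ) 1, T x y = T y x)
    (hTmono : ∀ x ∈ Icc (0:ℝ) 1, ∀ y ∈ Icc (0:ℝ) 1, ∀ u ∈ Icc (0:ℝ) 1,
      ∀ v ∈ Icc (0:ℝ) 1, x ≤ u → y ≤ v → T x y ≤ T u v)
    (hTnzd : ∀ a b : ℝ, 0 < a → a ≤ 1 → 0 < b → b ≤ 1 → 0 < T a b)
    (hl : ∀ x ∈ l, x ∈ Icc (0:ℝ) 1) : l.foldr T 1 = 0 ↔ (0:ℝ) ∈ l := by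
  constructor
  · intro h
    by_contra hne
    have hpos : ∀ x ∈ l, 0 < x := fun x hx => (hl x hx).1.lt_of_ne fun h0 => hne (h0 ▸ hx)
    exact (foldr_pos hT_mem hTnzd hl hpos).ne' h
  · intro hx
    exact le_antisymm (foldr_le_of_mem hT_mem hT1 hTcomm hTmono hl hx)
      (foldr_mem_Icc hT_mem hl).1

end TNorm

section Framework

variable {A : Type*} [Fintype A] {R : A → A → Prop} [DecidableRel R] {T : ℝ → ℝ → ℝ}
  {f ℓ : A → ℝ}

theorem one_sub_attackers_mem_Icc (hf : ∀ a, f a ∈ Icc (0:ℝ) 1) (a : A) :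
    ∀ x ∈ ((Finset.univ.filter (fun b => R b a)).toList.map (fun b => 1 - f b)),
      x ∈ Icc (0:ℝ) 1 := by
  simp only [List.forall_mem_map]
  exact fun b _ => ⟨by linarith [(hf b).2], by linarith [(hf b).1]⟩

theorem solution_eq_one_iff
    (hT_mem : ∀ x ∈ Icc (0:ℝ) 1, ∀ y ∈ Icc (0:ℝ) 1, T x y ∈ Icc (0:ℝ) 1)
    (hT1 : ∀ x ∈ Icc (0:ℝ) 1, T x 1 = x)
    (hTcomm : ∀ x ∈ Icc (0:ℝ) 1, ∀ y ∈ Icc (0:ℝ) 1, T x y = T y x)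
    (hTmono : ∀ x ∈ Icc (0:ℝ) 1, ∀ y ∈ Icc (0:ℝ) 1, ∀ u ∈ Icc (0:ℝ) 1,
      ∀ v ∈ Icc (0:ℝ) 1, x ≤ u → y ≤ v → T x y ≤ T u v)
    (hf : ∀ a, f a ∈ Icc (0:ℝ) 1)
    (hsol : ∀ a, f a = ((Finset.univ.filter (fun b => R b a)).toList.foldr
        (fun b acc => T (1 - f b) acc) 1)) (a : A) :
    f a = 1 ↔ ∀ b, R b a → f b = 0 := by
  rw [hsol a, ← List.foldr_map,
    foldr_eq_one_iff hT_mem hT1 hTcomm hTmono (one_sub_attackers_mem_Icc hf a)]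
  simp only [List.forall_mem_map, Finset.mem_toList, Finset.mem_filter, Finset.mem_univ,
    true_and, sub_eq_self]

theorem solution_eq_zero_iff
    (hT_mem : ∀ x ∈ Icc (0:ℝ) 1, ∀ y ∈ Icc (0:ℝ) 1, T x y ∈ Icc (0:ℝ) 1)
    (hT1 : ∀ x ∈ Icc (0:ℝ) 1, T x 1 = x)
    (hTcomm : ∀ x ∈ Icc (0:ℝ) 1, ∀ y ∈ Icc (0:ℝ) 1, T x y = T y x)
    (hTmono : ∀ x ∈ Icc (0:ℝ) 1, ∀ y ∈ Icc (0:ℝ) 1, ∀ u ∈ Icc (0:ℝ) 1,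
      ∀ v ∈ Icc (0:ℝ) 1, x ≤ u → y ≤ v → T x y ≤ T u v)
    (hTnzd : ∀ a b : ℝ, 0 < a → a ≤ 1 → 0 < b → b ≤ 1 → 0 < T a b)
    (hf : ∀ a, f a ∈ Icc (0:ℝ) 1)
    (hsol : ∀ a, f a = ((Finset.univ.filter (fun b => R b a)).toList.foldr
        (fun b acc => T (1 - f b) acc) 1)) (a : A) :
    f a = 0 ↔ ∃ b, R b a ∧ f b = 1 := by
  rw [hsol a, ← List.foldr_map,
    foldr_eq_zero_iff hT_mem hT1 hTcomm hTmono hTnzd (one_sub_attackers_mem_Icc hf a)]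
  simp only [List.mem_map, Finset.mem_toList, Finset.mem_filter, Finset.mem_univ, true_and,
    sub_eq_zero]
  exact exists_congr fun b => and_congr_right fun _ => eq_comm

theorem ternarization_eq_one_iff (hℓ1 : ∀ a, f a = 1 → ℓ a = 1)
    (hℓ0 : ∀ a, f a ≠ 1 → (∃ b, R b a ∧ f b = 1) → ℓ a = 0)
    (hℓh : ∀ a, f a ≠ 1 → ¬ (∃ b, R b a ∧ f b = 1) → ℓ a = 1/2) (a : A) :
    ℓ a = 1 ↔ f a = 1 := by
  refine ⟨fun h => ?_, hℓ1 a⟩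
  by_contra hne
  by_cases hatt : ∃ b, R b a ∧ f b = 1
  · norm_num [hℓ0 a hne hatt] at h
  · norm_num [hℓh a hne hatt] at h

theorem ternarization_eq_zero_iff (hfree : ∀ a b, R b a → f b = 1 → f a ≠ 1)
    (hℓ1 : ∀ a, f a = 1 → ℓ a = 1)
    (hℓ0 : ∀ a, f a ≠ 1 → (∃ b, R b a ∧ f b = 1) → ℓ a = 0)
    (hℓh : ∀ a, f a ≠ 1 → ¬ (∃ b, R b a ∧ f b = 1) → ℓ a = 1/2) (a : A) :
    ℓ a = 0 ↔ ∃ b, R b a ∧ f b = 1 := by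
  refine ⟨fun h => ?_, fun ⟨b, hba, hb⟩ => hℓ0 a (hfree a b hba hb) ⟨b, hba, hb⟩⟩
  by_cases hne : f a = 1
  · norm_num [hℓ1 a hne] at h
  · by_contra hatt
    norm_num [hℓh a hne hatt] at h

end Framework

theorem ternarization_is_complete_general {A : Type*} [Fintype A]
    (R : A → A → Prop) [DecidableRel R]
    (T : ℝ → ℝ → ℝ)
    (hT_mem : ∀ x ∈ Set.Icc (0:ℝ) 1, ∀ y ∈ Set.Icc (0:ℝ) 1, T x y ∈ Set.Icc (0:ℝ) 1)
    (hT1 : ∀ x ∈ Set.Icc (0:ℝ) 1, T x 1 = x)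
    (hTcomm : ∀ x ∈ Set.Icc (0:ℝ) 1, ∀ y ∈ Set.Icc (0:ℝ) 1, T x y = T y x)
    (hTmono : ∀ x ∈ Set.Icc (0:ℝ) 1, ∀ y ∈ Set.Icc (0:ℝ) 1, ∀ u ∈ Set.Icc (0:ℝ) 1,
      ∀ v ∈ Set.Icc (0:ℝ) 1, x ≤ u → y ≤ v → T x y ≤ T u v)
    (hTnzd : ∀ a b : ℝ, 0 < a → a ≤ 1 → 0 < b → b ≤ 1 → 0 < T a b)
    (f : A → ℝ) (hf : ∀ a, f a ∈ Set.Icc (0:ℝ) 1)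
    (hsol : ∀ a, f a = ((Finset.univ.filter (fun b => R b a)).toList.foldr
        (fun b acc => T (1 - f b) acc) 1))
    (ℓ : A → ℝ)
    (hℓ1 : ∀ a, f a = 1 → ℓ a = 1)
    (hℓ0 : ∀ a, f a ≠ 1 → (∃ b, R b a ∧ f b = 1) → ℓ a = 0)
    (hℓh : ∀ a, f a ≠ 1 → ¬ (∃ b, R b a ∧ f b = 1) → ℓ a = 1/2) :
    ∀ a, (ℓ a = 1 ↔ ∀ b, R b a → ℓ b = 0) ∧
         (ℓ a = 0 ↔ ∃ b, R b a ∧ ℓ b = 1) := by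
  have hone := solution_eq_one_iff hT_mem hT1 hTcomm hTmono hf hsol
  have hzero := solution_eq_zero_iff hT_mem hT1 hTcomm hTmono hTnzd hf hsol
  have hfree : ∀ a b, R b a → f b = 1 → f a ≠ 1 := fun a b hba hb ha => by
    linarith [(hzero a).2 ⟨b, hba, hb⟩]
  have hℓ_one := ternarization_eq_one_iff hℓ1 hℓ0 hℓh
  have hℓ_zero := ternarization_eq_zero_iff hfree hℓ1 hℓ0 hℓh
  intro a
  refine ⟨?_, ?_⟩
  · rw [hℓ_one, hone]
    exact forall₂_congr fun b _ => (hzero b).trans (hℓ_zero b).symm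
  · rw [hℓ_zero]
    simp only [hℓ_one]

/-- The ternarization of a solution of the encoded system (standard negation, t-norm
without zero divisors) is a complete labelling. -/
theorem ternarization_is_complete {A : Type*} [Fintype A] [DecidableEq A]
    (R : A → A → Prop) [DecidableRel R]
    (T : ℝ → ℝ → ℝ)
    (hT_mem : ∀ x ∈ Set.Icc (0:ℝ) 1, ∀ y ∈ Set.Icc (0:ℝ) 1, T x y ∈ Set.Icc (0:ℝ) 1)
    (hT1 : ∀ x ∈ Set.Icc (0:ℝ) 1, T x 1 = x)
    (hTcomm : ∀ x ∈ Set.Icc (0:ℝ) 1, ∀ y ∈ Set.Icc (0:ℝ) 1, T x y = T y x)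
    (hTassoc : ∀ x ∈ Set.Icc (0:ℝ) 1, ∀ y ∈ Set.Icc (0:ℝ) 1, ∀ z ∈ Set.Icc (0:ℝ) 1,
      T x (T y z) = T (T x y) z)
    (hTmono : ∀ x ∈ Set.Icc (0:ℝ) 1, ∀ y ∈ Set.Icc (0:ℝ) 1, ∀ u ∈ Set.Icc (0:ℝ) 1,
      ∀ v ∈ Set.Icc (0:ℝ) 1, x ≤ u → y ≤ v → T x y ≤ T u v)
    (hTnzd : ∀ a b : ℝ, 0 < a → a ≤ 1 → 0 < b → b ≤ 1 → 0 < T a b)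
    (f : A → ℝ) (hf : ∀ a, f a ∈ Set.Icc (0:ℝ) 1)
    (hsol : ∀ a, f a = ((Finset.univ.filter (fun b => R b a)).toList.foldr
        (fun b acc => T (1 - f b) acc) 1))
    (ℓ : A → ℝ)
    (hℓ1 : ∀ a, f a = 1 → ℓ a = 1)
    (hℓ0 : ∀ a, f a ≠ 1 → (∃ b, R b a ∧ f b = 1) → ℓ a = 0)
    (hℓh : ∀ a, f a ≠ 1 → ¬ (∃ b, R b a ∧ f b = 1) → ℓ a = 1/2) :
    ∀ a, (ℓ a = 1 ↔ ∀ b, R b a → ℓ b = 0) ∧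
         (ℓ a = 0 ↔ ∃ b, R b a ∧ ℓ b = 1) :=
  ternarization_is_complete_general R T hT_mem hT1 hTcomm hTmono hTnzd f hf hsol ℓ hℓ1 hℓ0 hℓh
end

section
/- Let (A,R) be a finite argumentation framework, N the standard negation, and ⊙ a t-norm with (1/2) ⊙ (1/2) = 1/2. If ℓ : A → {0,1/2,1} is a complete labelling, then ℓ is a solution of the ⊙-encoded equational system: for every a, ℓ(a) = ⊙-product over attackers b of (1 - ℓ(b)) (empty product = 1). -/
/-!
On the three truth values `{0, 1/2, 1}` a `1/2`-idempotent t-norm coincides with `min`: `0` is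
absorbing by monotonicity, `1` is the unit, and `(1/2) ⊙ (1/2) = 1/2`. The encoded equation
therefore reads `ℓ a = min_{b → a} (1 - ℓ b)`, and this minimum is `1` exactly when every
attacker is labelled `0` and `0` exactly when some attacker is labelled `1`, which are the two
clauses defining a complete labelling.
-/

namespace List

variable {α β : Type*} [LinearOrder α]

theorem le_foldr_min_iff {l : List α} {e z : α} :
    z ≤ l.foldr min e ↔ z ≤ e ∧ ∀ x ∈ l, z ≤ x := by
  induction l with
  | nil => simp
  | cons y l ih => simp only [foldr_cons, le_min_iff, ih, forall_mem_cons]; tauto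

theorem foldr_min_le_iff {l : List α} {e z : α} :
    l.foldr min e ≤ z ↔ e ≤ z ∨ ∃ x ∈ l, x ≤ z := by
  induction l with
  | nil => simp
  | cons y l ih => simp only [foldr_cons, min_le_iff, ih, mem_cons, exists_eq_or_imp]; tauto

theorem foldr_min_mem {S : Set α} {l : List α} {e : α} (he : e ∈ S)
    (hl : ∀ x ∈ l, x ∈ S) :
    l.foldr min e ∈ S := by
  induction l with
  | nil => exact he
  | cons y l ih =>
    rcases min_choice y (l.foldr min e) with h | h <;> rw [foldr_cons, h]
    exacts [hl y mem_cons_self, ih fun x hx => hl x (mem_cons_of_mem y hx)]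

theorem foldr_min_eq_self_iff {l : List α} {e : α} (h : ∀ x ∈ l, x ≤ e) :
    l.foldr min e = e ↔ ∀ x ∈ l, x = e := by
  constructor
  · intro h' x hx
    exact le_antisymm (h x hx) ((le_foldr_min_iff.1 h'.ge).2 x hx)
  · intro h'
    exact le_antisymm (foldr_min_le_iff.2 (Or.inl le_rfl))
      (le_foldr_min_iff.2 ⟨le_rfl, fun x hx => (h' x hx).ge⟩)

theorem foldr_min_eq_iff_mem {l : List α} {e z : α} (hz : z < e) (h : ∀ x ∈ l, z ≤ x) :
    l.foldr min e = z ↔ z ∈ l := by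
  constructor
  · intro h'
    obtain ⟨x, hx, hxz⟩ := (foldr_min_le_iff.1 h'.le).resolve_left hz.not_ge
    exact le_antisymm hxz (h x hx) ▸ hx
  · intro hzl
    exact le_antisymm (foldr_min_le_iff.2 (Or.inr ⟨z, hzl, le_rfl⟩))
      (le_foldr_min_iff.2 ⟨hz.le, h⟩)

theorem foldr_eq_foldr_min_of_eqOn {S : Set α} {op : α → α → α}
    (hop : ∀ x ∈ S, ∀ y ∈ S, op x y = min x y) {f : β → α} {l : List β} {e : α}
    (he : e ∈ S) (hf : ∀ b ∈ l, f b ∈ S) :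
    l.foldr (fun b acc => op (f b) acc) e = (l.map f).foldr min e := by
  induction l with
  | nil => rfl
  | cons b l ih =>
    have hl : ∀ b ∈ l, f b ∈ S := fun b hb => hf b (mem_cons_of_mem _ hb)
    rw [foldr_cons, ih hl, map_cons, foldr_cons]
    exact hop _ (hf b mem_cons_self) _ (foldr_min_mem he (by simpa using hl))

end List

theorem zero_half_one_subset_Icc : ({0, 1/2, 1} : Set ℝ) ⊆ Set.Icc 0 1 := by
  rintro x (rfl | rfl | rfl) <;> norm_num

theorem tnorm_zero_right {T : ℝ → ℝ → ℝ}
    (hT_mem : ∀ x ∈ Set.Icc (0:ℝ) 1, ∀ y ∈ Set.Icc (0:ℝ) 1, T x y ∈ Set.Icc (0:ℝ) 1)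
    (hT1 : ∀ x ∈ Set.Icc (0:ℝ) 1, T x 1 = x)
    (hTcomm : ∀ x ∈ Set.Icc (0:ℝ) 1, ∀ y ∈ Set.Icc (0:ℝ) 1, T x y = T y x)
    (hTmono : ∀ x ∈ Set.Icc (0:ℝ) 1, ∀ y ∈ Set.Icc (0:ℝ) 1, ∀ u ∈ Set.Icc (0:ℝ) 1,
      ∀ v ∈ Set.Icc (0:ℝ) 1, x ≤ u → y ≤ v → T x y ≤ T u v)
    {x : ℝ} (hx : x ∈ Set.Icc (0:ℝ) 1) : T x 0 = 0 := by
  have h0 : (0:ℝ) ∈ Set.Icc (0:ℝ) 1 := by norm_num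
  have h1 : (1:ℝ) ∈ Set.Icc (0:ℝ) 1 := by norm_num
  have hle : T x 0 ≤ T 1 0 := hTmono x hx 0 h0 1 h1 0 h0 hx.2 le_rfl
  rw [hTcomm 1 h1 0 h0, hT1 0 h0] at hle
  exact le_antisymm hle (hT_mem x hx 0 h0).1

theorem tnorm_eq_min_of_half_idempotent {T : ℝ → ℝ → ℝ}
    (hT_mem : ∀ x ∈ Set.Icc (0:ℝ) 1, ∀ y ∈ Set.Icc (0:ℝ) 1, T x y ∈ Set.Icc (0:ℝ) 1)
    (hT1 : ∀ x ∈ Set.Icc (0:ℝ) 1, T x 1 = x)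
    (hTcomm : ∀ x ∈ Set.Icc (0:ℝ) 1, ∀ y ∈ Set.Icc (0:ℝ) 1, T x y = T y x)
    (hTmono : ∀ x ∈ Set.Icc (0:ℝ) 1, ∀ y ∈ Set.Icc (0:ℝ) 1, ∀ u ∈ Set.Icc (0:ℝ) 1,
      ∀ v ∈ Set.Icc (0:ℝ) 1, x ≤ u → y ≤ v → T x y ≤ T u v)
    (hThalf : T (1/2) (1/2) = 1/2) :
    ∀ x ∈ ({0, 1/2, 1} : Set ℝ), ∀ y ∈ ({0, 1/2, 1} : Set ℝ), T x y = min x y := by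
  have hzero : ∀ {x}, x ∈ Set.Icc (0:ℝ) 1 → T x 0 = 0 :=
    tnorm_zero_right hT_mem hT1 hTcomm hTmono
  intro x hx y hy
  have hxI := zero_half_one_subset_Icc hx
  have hyI := zero_half_one_subset_Icc hy
  rcases hy with rfl | rfl | rfl
  · rw [hzero hxI, min_eq_right hxI.1]
  · rw [hTcomm x hxI _ hyI]
    rcases hx with rfl | rfl | rfl
    · rw [hzero hyI]; norm_num
    · rw [hThalf, min_self]
    · rw [hT1 _ hyI]; norm_num
  · rw [hT1 x hxI, min_eq_left hxI.2]

theorem eq_of_mem_zero_half_one {x y : ℝ} (hx : x ∈ ({0, 1/2, 1} : Set ℝ))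
    (hy : y ∈ ({0, 1/2, 1} : Set ℝ)) (h1 : x = 1 ↔ y = 1) (h0 : x = 0 ↔ y = 0) : x = y := by
  rcases hx with rfl | rfl | rfl <;> rcases hy with rfl | rfl | rfl <;> norm_num at *

theorem one_sub_mem_zero_half_one {x : ℝ} (hx : x ∈ ({0, 1/2, 1} : Set ℝ)) :
    1 - x ∈ ({0, 1/2, 1} : Set ℝ) := by
  rcases hx with rfl | rfl | rfl <;> norm_num

theorem complete_labelling_eq_foldr_min {A : Type*} (R : A → A → Prop) (ℓ : A → ℝ)
    (hrange : ∀ a, ℓ a = 0 ∨ ℓ a = 1/2 ∨ ℓ a = 1)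
    (hcomplete : ∀ a, (ℓ a = 1 ↔ ∀ b, R b a → ℓ b = 0) ∧
      (ℓ a = 0 ↔ ∃ b, R b a ∧ ℓ b = 1))
    (a : A) (L : List A) (hL : ∀ b, b ∈ L ↔ R b a) :
    ℓ a = (L.map (1 - ℓ ·)).foldr min 1 := by
  have hmem : ∀ x ∈ L.map (1 - ℓ ·), x ∈ ({0, 1/2, 1} : Set ℝ) := by
    simpa only [List.forall_mem_map] using fun b _ => one_sub_mem_zero_half_one (hrange b)
  have hIcc : ∀ x ∈ L.map (1 - ℓ ·), x ∈ Set.Icc (0:ℝ) 1 :=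
    fun x hx => zero_half_one_subset_Icc (hmem x hx)
  refine eq_of_mem_zero_half_one (hrange a) (List.foldr_min_mem (by simp) hmem) ?_ ?_
  · rw [(hcomplete a).1, List.foldr_min_eq_self_iff fun x hx => (hIcc x hx).2,
      List.forall_mem_map]
    simp only [hL, sub_eq_self]
  · rw [(hcomplete a).2, List.foldr_min_eq_iff_mem zero_lt_one fun x hx => (hIcc x hx).1,
      List.mem_map]
    simp only [hL, sub_eq_zero, @eq_comm ℝ 1]

theorem complete_is_half_idempotent_encoded_general {A : Type*} [Fintype A]
    (R : A → A → Prop) [DecidableRel R]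
    (T : ℝ → ℝ → ℝ)
    (hT_mem : ∀ x ∈ Set.Icc (0:ℝ) 1, ∀ y ∈ Set.Icc (0:ℝ) 1, T x y ∈ Set.Icc (0:ℝ) 1)
    (hT1 : ∀ x ∈ Set.Icc (0:ℝ) 1, T x 1 = x)
    (hTcomm : ∀ x ∈ Set.Icc (0:ℝ) 1, ∀ y ∈ Set.Icc (0:ℝ) 1, T x y = T y x)
    (hTmono : ∀ x ∈ Set.Icc (0:ℝ) 1, ∀ y ∈ Set.Icc (0:ℝ) 1, ∀ u ∈ Set.Icc (0:ℝ) 1,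
      ∀ v ∈ Set.Icc (0:ℝ) 1, x ≤ u → y ≤ v → T x y ≤ T u v)
    (hThalf : T (1/2) (1/2) = 1/2)
    (ℓ : A → ℝ) (hrange : ∀ a, ℓ a = 0 ∨ ℓ a = 1/2 ∨ ℓ a = 1)
    (hcomplete : ∀ a, (ℓ a = 1 ↔ ∀ b, R b a → ℓ b = 0) ∧
                      (ℓ a = 0 ↔ ∃ b, R b a ∧ ℓ b = 1)) :
    ∀ a, ℓ a = ((Finset.univ.filter (fun b => R b a)).toList.foldr
        (fun b acc => T (1 - ℓ b) acc) 1) := by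
  intro a
  rw [List.foldr_eq_foldr_min_of_eqOn
    (tnorm_eq_min_of_half_idempotent hT_mem hT1 hTcomm hTmono hThalf) (by simp)
    (fun b _ => one_sub_mem_zero_half_one (hrange b))]
  exact complete_labelling_eq_foldr_min R ℓ hrange hcomplete a _ (by simp)

/-- Every complete labelling is a solution of the encoded system for a t-norm ⊙
with (1/2) ⊙ (1/2) = 1/2 and the standard negation. -/
theorem complete_is_half_idempotent_encoded {A : Type*} [Fintype A] [DecidableEq A]
    (R : A → A → Prop) [DecidableRel R]
    (T : ℝ → ℝ → ℝ)
    (hT_mem : ∀ x ∈ Set.Icc (0:ℝ) 1, ∀ y ∈ Set.Icc (0:ℝ) 1, T x y ∈ Set.Icc (0:ℝ) 1)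
    (hT1 : ∀ x ∈ Set.Icc (0:ℝ) 1, T x 1 = x)
    (hTcomm : ∀ x ∈ Set.Icc (0:ℝ) 1, ∀ y ∈ Set.Icc (0:ℝ) 1, T x y = T y x)
    (hTassoc : ∀ x ∈ Set.Icc (0:ℝ) 1, ∀ y ∈ Set.Icc (0:ℝ) 1, ∀ z ∈ Set.Icc (0:ℝ) 1,
      T x (T y z) = T (T x y) z)
    (hTmono : ∀ x ∈ Set.Icc (0:ℝ) 1, ∀ y ∈ Set.Icc (0:ℝ) 1, ∀ u ∈ Set.Icc (0:ℝ) 1,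
      ∀ v ∈ Set.Icc (0:ℝ) 1, x ≤ u → y ≤ v → T x y ≤ T u v)
    (hThalf : T (1/2) (1/2) = 1/2)
    (ℓ : A → ℝ) (hrange : ∀ a, ℓ a = 0 ∨ ℓ a = 1/2 ∨ ℓ a = 1)
    (hcomplete : ∀ a, (ℓ a = 1 ↔ ∀ b, R b a → ℓ b = 0) ∧
                      (ℓ a = 0 ↔ ∃ b, R b a ∧ ℓ b = 1)) :
    ∀ a, ℓ a = ((Finset.univ.filter (fun b => R b a)).toList.foldr
        (fun b acc => T (1 - ℓ b) acc) 1) :=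
  complete_is_half_idempotent_encoded_general R T hT_mem hT1 hTcomm hTmono hThalf ℓ hrange hcomplete
end
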